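/- arXiv:1504.01357 — 2 statements merged into one kernel-verified Lean document; each statement's English description precedes it below -/
import Mathlib

section
/- Let α > 0 and φ ∈ ω_{α,loc}. Then q_φ is a norm on the space c_{0,0} of finitely supported complex sequences, and there exists a constant C_φ > 0, independent of f and g, such that q_φ(f*g) ≤ C_φ · q_φ(f) · q_φ(g) for all f, g ∈ c_{0,0}. -/
/-- The Cesàro kernel `k^α(n) = Γ(n+α)/(Γ(α)·Γ(n+1))`. -/
noncomputable def cesK (α : ℝ) (n : ℕ) : ℝ :=
  Real.Gamma ((n : ℝ) + α) / (Real.Gamma α * Real.Gamma ((n : ℝ) + 1))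

/-- `φ` belongs to the class `ω_{α,loc}` with constant `c`. -/
def omegaLoc (α : ℝ) (φ : ℕ → ℝ) (c : ℝ) : Prop :=
  ∀ j p : ℕ, 1 ≤ j → j ≤ p →
    ((∑ n ∈ Finset.range (j + 1), cesK α n * φ (j + p - n)) +
        ∑ n ∈ Finset.Icc (p + 1) (j + p), cesK α n * φ (j + p - n)) ≤ c * (φ j * φ p)

/-- The Weyl sum of order `α`: `W^{-α}f(n) = ∑_{j=n}^∞ k^α(j-n)·f(j)`. -/
noncomputable def weylSum (α : ℝ) (f : ℕ → ℂ) : ℕ → ℂ :=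
  fun n => ∑ᶠ j : ℕ, (cesK α j : ℂ) * f (j + n)

/-- The forward difference operator `Δh(n) = h(n+1) - h(n)`. -/
def fdiff (f : ℕ → ℂ) : ℕ → ℂ := fun n => f (n + 1) - f n

/-- The Weyl difference of order `α > 0`:
`W^α f(n) = (-1)^m Δ^m W^{-(m-α)} f(n)` with `m = [α]+1`; and `W^0 f = f`. -/
noncomputable def weylDiff (α : ℝ) (f : ℕ → ℂ) : ℕ → ℂ :=
  if α = 0 then f
  else fun n => (-1 : ℂ) ^ (⌊α⌋₊ + 1) * fdiff^[⌊α⌋₊ + 1] (weylSum ((⌊α⌋₊ : ℝ) + 1 - α) f) n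

/-- Convolution of sequences: `(f*g)(n) = ∑_{j=0}^n f(n-j)·g(j)`. -/
noncomputable def conv (f g : ℕ → ℂ) (n : ℕ) : ℂ :=
  ∑ j ∈ Finset.range (n + 1), f (n - j) * g j

/-- `q_φ(f) = ∑_{n=0}^∞ φ(n)·|W^α f(n)|`, a finite sum for finitely supported `f`. -/
noncomputable def qNorm (α : ℝ) (φ : ℕ → ℝ) (f : ℕ → ℂ) : ℝ :=
  ∑ᶠ n : ℕ, φ n * ‖weylDiff α f n‖

/-!
For finitely supported `f`, the Weyl difference `W^α f` is the backward convolution of `f` with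
the coefficients `k^{-α}(n) = multichoose (-α) n` of `(1 - z)^α`. By Vandermonde's identity these
backward convolutions compose additively in the order, so `W^α` is inverted by `W^{-α}`; this
makes `q_φ` a norm and gives the expansion `f = ∑ⱼ W^α f(j) • uⱼ` with `uⱼ = W^{-α} eⱼ`.
Hence `q_φ(f * g) ≤ ∑_{j,p} |W^α f(j)| |W^α g(p)| q_φ(uⱼ * uₚ)`. Reflecting `[0, j + p]` turns
`uⱼ * uₚ` into a Cauchy product of truncations of `k^α`, which identifies `W^α(uⱼ * uₚ)`: for
`j ≤ p` it is `k^α(j+p-s)` on `[p, j+p]` and `-k^α(j+p-s)` on `[0, j)`. Its weighted `ℓ¹` norm is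
exactly the left-hand side of the `ω_{α,loc}` condition, hence at most `c φ(j) φ(p)` for `j ≥ 1`.
-/

open Finset
open Ring (multichoose)

namespace Ring

variable {R : Type*}

theorem multichoose_add [CommRing R] [BinomialRing R] (r s : R) (n : ℕ) :
    multichoose (r + s) n = ∑ ij ∈ antidiagonal n, multichoose r ij.1 * multichoose s ij.2 := by
  have h := add_choose_eq (r := -r) (s := -s) n (Commute.all _ _)
  simp only [← neg_add, choose_neg', Units.smul_def, zsmul_eq_mul,
    Int.cast_negOnePow_natCast] at h
  rw [sum_congr rfl fun ij hij => by
    rw [mul_mul_mul_comm, ← pow_add, mem_antidiagonal.1 hij], ← mul_sum] at h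
  exact (isUnit_neg_one.pow n).mul_left_cancel h

theorem multichoose_neg_one_add_two [NonAssocRing R] [Pow R ℕ] [NatPowAssoc R] [BinomialRing R]
    (k : ℕ) : multichoose (-1 : R) (k + 2) = 0 := by
  have h := multichoose_succ_succ (-1 : R) (k + 1)
  rwa [neg_add_cancel, multichoose_zero_succ, multichoose_zero_succ, add_zero, eq_comm] at h

end Ring

theorem Real.multichoose_eq_div (r : ℝ) (n : ℕ) :
    multichoose r n = (ascPochhammer ℝ n).eval r / n.factorial := by
  rw [eq_div_iff (by positivity), mul_comm, ← nsmul_eq_mul,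
    Ring.factorial_nsmul_multichoose_eq_ascPochhammer, Polynomial.ascPochhammer_smeval_eq_eval]

theorem Real.Gamma_nat_add_eq_mul_ascPochhammer {r : ℝ} (hr : 0 < r) (n : ℕ) :
    Real.Gamma (n + r) = Real.Gamma r * (ascPochhammer ℝ n).eval r := by
  induction n with
  | zero => simp
  | succ n ih =>
    rw [Nat.cast_succ, add_right_comm, Real.Gamma_add_one (by positivity), ih,
      ascPochhammer_succ_eval]
    ring

theorem Real.multichoose_pos {r : ℝ} (hr : 0 < r) (n : ℕ) : 0 < multichoose r n := by
  rw [Real.multichoose_eq_div]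
  exact div_pos (ascPochhammer_pos n r hr) (by positivity)

theorem cesK_eq_multichoose {r : ℝ} (hr : 0 < r) : cesK r = multichoose r := by
  ext n
  rw [cesK, Real.Gamma_nat_add_eq_mul_ascPochhammer hr, Real.Gamma_nat_eq_factorial,
    Real.multichoose_eq_div, mul_div_mul_left _ _ (Real.Gamma_pos_of_pos hr).ne']

theorem exists_forall_ge_eq_zero {M : Type*} [Zero M] {f : ℕ → M} (hf : f.support.Finite) :
    ∃ N, ∀ i ≥ N, f i = 0 := by
  obtain ⟨N, hN⟩ := hf.bddAbove
  exact ⟨N + 1, fun i hi => Function.notMem_support.1 fun h => by have := hN h; omega⟩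

theorem support_finite_of_forall_ge_eq_zero {M : Type*} [Zero M] {f : ℕ → M} {N : ℕ}
    (hf : ∀ i ≥ N, f i = 0) : f.support.Finite :=
  (Set.finite_Iio N).subset fun i hi => lt_of_not_ge fun h => hi (hf i h)

/-- `W^{-r} = backConv (cesK r)`; the kernel `multichoose r` makes sense for every real `r`. -/
noncomputable def backConv (σ : ℕ → ℝ) (f : ℕ → ℂ) : ℕ → ℂ :=
  fun n => ∑ᶠ t : ℕ, (σ t : ℂ) * f (t + n)

section backConv

variable {σ τ : ℕ → ℝ} {f g : ℕ → ℂ} {N : ℕ}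

theorem backConv_eq_sum_range {K n : ℕ} (h : ∀ t ≥ K, (σ t : ℂ) * f (t + n) = 0) :
    backConv σ f n = ∑ t ∈ range K, σ t * f (t + n) :=
  finsum_eq_sum_of_support_subset _ fun t ht =>
    by simpa using lt_of_not_ge fun hK => ht (h t hK)

theorem backConv_eq_sum (hf : ∀ i ≥ N, f i = 0) (n : ℕ) :
    backConv σ f n = ∑ t ∈ range N, σ t * f (t + n) :=
  backConv_eq_sum_range fun t ht => by rw [hf _ (by omega), mul_zero]

theorem backConv_eq_zero_of_le (hf : ∀ i ≥ N, f i = 0) : ∀ n ≥ N, backConv σ f n = 0 := by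
  intro n hn
  simpa using backConv_eq_sum_range (σ := σ) (K := 0) fun t _ => by rw [hf _ (by omega), mul_zero]

theorem backConv_add (hf : ∀ i ≥ N, f i = 0) (hg : ∀ i ≥ N, g i = 0) :
    backConv σ (f + g) = backConv σ f + backConv σ g := by
  ext n
  have hfg : ∀ i ≥ N, (f + g) i = 0 := fun i hi => by simp [hf i hi, hg i hi]
  simp only [Pi.add_apply, backConv_eq_sum hf, backConv_eq_sum hg, backConv_eq_sum hfg, mul_add,
    sum_add_distrib]

theorem backConv_smul (hf : ∀ i ≥ N, f i = 0) (a : ℂ) :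
    backConv σ (a • f) = a • backConv σ f := by
  ext n
  have haf : ∀ i ≥ N, (a • f) i = 0 := fun i hi => by simp [hf i hi]
  simp only [Pi.smul_apply, smul_eq_mul, backConv_eq_sum hf, backConv_eq_sum haf, mul_sum]
  exact sum_congr rfl fun t _ => by ring

theorem backConv_backConv (hf : ∀ i ≥ N, f i = 0) :
    backConv σ (backConv τ f) =
      backConv (fun n => ∑ ij ∈ antidiagonal n, σ ij.1 * τ ij.2) f := by
  ext n
  have inner : ∀ t, backConv τ f (t + n) = ∑ s ∈ range (N - t), τ s * f (s + (t + n)) :=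
    fun t => backConv_eq_sum_range fun s hs => by rw [hf _ (by omega), mul_zero]
  rw [backConv_eq_sum (backConv_eq_zero_of_le hf), backConv_eq_sum hf]
  simp_rw [inner, mul_sum, Nat.sum_antidiagonal_eq_sum_range_succ_mk, Complex.ofReal_sum, sum_mul]
  rw [← sum_range_diag_flip]
  refine sum_congr rfl fun m _ => sum_congr rfl fun k hk => ?_
  rw [show m - k + (k + n) = m + n by have := mem_range.1 hk; omega]
  push_cast
  ring

theorem backConv_multichoose_add (r s : ℝ) (hf : ∀ i ≥ N, f i = 0) :
    backConv (multichoose r) (backConv (multichoose s) f) = backConv (multichoose (r + s)) f := by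
  rw [backConv_backConv hf, funext (Ring.multichoose_add r s)]

theorem backConv_multichoose_zero (f : ℕ → ℂ) : backConv (multichoose 0) f = f := by
  ext n
  rw [backConv_eq_sum_range (K := 1) fun t ht => ?_]
  · simp
  · obtain ⟨k, rfl⟩ := Nat.exists_eq_add_of_le' ht
    simp

theorem backConv_multichoose_neg_one (h : ℕ → ℂ) (n : ℕ) :
    backConv (multichoose (-1)) h n = h n - h (n + 1) := by
  rw [backConv_eq_sum_range (K := 2) fun t ht => ?_]
  · simp [sum_range_succ, add_comm 1 n, sub_eq_add_neg]
  · obtain ⟨k, rfl⟩ := Nat.exists_eq_add_of_le' ht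
    simp [Ring.multichoose_neg_one_add_two]

theorem fdiff_smul (a : ℂ) (h : ℕ → ℂ) : fdiff (a • h) = a • fdiff h := by
  ext n
  simp [fdiff, mul_sub]

theorem fdiff_backConv_multichoose (r : ℝ) (hf : ∀ i ≥ N, f i = 0) :
    fdiff (backConv (multichoose r) f) = -backConv (multichoose (r - 1)) f := by
  ext n
  rw [fdiff, Pi.neg_apply, sub_eq_neg_add r, ← backConv_multichoose_add _ _ hf,
    backConv_multichoose_neg_one]
  ring

theorem iterate_fdiff_backConv_multichoose (r : ℝ) (hf : ∀ i ≥ N, f i = 0) (q : ℕ) :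
    fdiff^[q] (backConv (multichoose r) f) =
      (-1 : ℂ) ^ q • backConv (multichoose (r - q)) f := by
  induction q with
  | zero => simp
  | succ q ih =>
    rw [Function.iterate_succ_apply', ih, fdiff_smul, fdiff_backConv_multichoose _ hf,
      pow_succ, mul_comm, mul_smul, neg_one_smul, smul_neg, Nat.cast_succ, sub_add_eq_sub_sub]

end backConv

theorem weylDiff_eq_backConv {α : ℝ} (hα : 0 < α) {f : ℕ → ℂ} {N : ℕ} (hf : ∀ i ≥ N, f i = 0) :
    weylDiff α f = backConv (multichoose (-α)) f := by
  have hβ : 0 < (⌊α⌋₊ : ℝ) + 1 - α := by linarith [Nat.lt_floor_add_one α]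
  have hW : weylSum ((⌊α⌋₊ : ℝ) + 1 - α) f = backConv (multichoose ((⌊α⌋₊ : ℝ) + 1 - α)) f := by
    rw [← cesK_eq_multichoose hβ]
    rfl
  ext n
  rw [weylDiff, if_neg hα.ne', hW, iterate_fdiff_backConv_multichoose _ hf]
  simp [← mul_assoc, ← mul_pow]

theorem conv_comm (f g : ℕ → ℂ) : conv f g = conv g f := by
  ext n
  rw [conv, conv, ← sum_range_reflect]
  refine sum_congr rfl fun i hi => ?_
  rw [mul_comm, show n + 1 - 1 - i = n - i by omega,
    show n - (n - i) = i by have := mem_range.1 hi; omega]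

def reflect (N : ℕ) (v : ℕ → ℂ) (s : ℕ) : ℂ := if s ≤ N then v (N - s) else 0

theorem reflect_eq_zero {N : ℕ} (v : ℕ → ℂ) : ∀ s ≥ N + 1, reflect N v s = 0 :=
  fun s hs => if_neg (by omega)

theorem reflect_congr {N : ℕ} {v w : ℕ → ℂ} (h : ∀ s ≤ N, v s = w s) :
    reflect N v = reflect N w := by
  ext s
  unfold reflect
  split_ifs <;> simp [h _ (Nat.sub_le N s)]

theorem backConv_reflect (σ : ℕ → ℝ) (N : ℕ) (v : ℕ → ℂ) :
    backConv σ (reflect N v) = reflect N (conv v fun m => σ m) := by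
  ext n
  by_cases hn : n ≤ N
  · rw [backConv_eq_sum_range (K := N - n + 1) fun t ht => by
      rw [reflect_eq_zero v _ (by omega), mul_zero], reflect, if_pos hn, conv]
    refine sum_congr rfl fun t ht => ?_
    rw [reflect, if_pos (by have := mem_range.1 ht; omega), mul_comm,
      show N - (t + n) = N - n - t by omega]
  · rw [backConv_eq_zero_of_le (reflect_eq_zero v) n (by omega), reflect, if_neg hn]

theorem le_of_reflect_ne_zero {N s : ℕ} {v : ℕ → ℂ} (h : reflect N v s ≠ 0) : s ≤ N :=
  by_contra fun h' => h (if_neg h')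

theorem conv_reflect_reflect (j p : ℕ) (f g : ℕ → ℂ) :
    conv (reflect j f) (reflect p g) =
      reflect (j + p) (conv ((Set.Iic j).indicator f) ((Set.Iic p).indicator g)) := by
  ext n
  by_cases hn : n ≤ j + p
  · rw [reflect, if_pos hn, conv, conv]
    refine sum_bij_ne_zero (fun i _ _ => p - i) (fun i hi h => ?_) (fun i₁ _ h₁ i₂ _ h₂ h => ?_)
      (fun k hk h => ?_) (fun i hi h => ?_)
    · have := le_of_reflect_ne_zero (left_ne_zero_of_mul h)
      simp only [mem_range] at hi ⊢
      omega
    · have := le_of_reflect_ne_zero (right_ne_zero_of_mul h₁)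
      have := le_of_reflect_ne_zero (right_ne_zero_of_mul h₂)
      omega
    · have hk₁ := Set.mem_of_indicator_ne_zero (left_ne_zero_of_mul h)
      have hk₂ := Set.mem_of_indicator_ne_zero (right_ne_zero_of_mul h)
      simp only [Set.mem_Iic, mem_range] at hk hk₁ hk₂
      have hterm : reflect j f (n - (p - k)) * reflect p g (p - k) =
          (Set.Iic j).indicator f (j + p - n - k) * (Set.Iic p).indicator g k := by
        simp only [reflect, Set.indicator, Set.mem_Iic]
        rw [if_pos (by omega), if_pos (by omega), if_pos hk₁, if_pos hk₂,
          show j - (n - (p - k)) = j + p - n - k by omega, show p - (p - k) = k by omega]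
      exact ⟨p - k, mem_range.2 (by omega), hterm ▸ h, by omega⟩
    · have := le_of_reflect_ne_zero (left_ne_zero_of_mul h)
      have := le_of_reflect_ne_zero (right_ne_zero_of_mul h)
      have := mem_range.1 hi
      simp only [reflect, Set.indicator, Set.mem_Iic]
      rw [if_pos (by omega), if_pos (by omega), if_pos (by omega), if_pos (by omega),
        show j - (n - i) = j + p - n - (p - i) by omega]
  · rw [reflect, if_neg hn, conv]
    refine sum_eq_zero fun i _ => ?_
    by_cases hi : i ≤ p
    · simp [reflect, show ¬n - i ≤ j by omega]
    · simp [reflect, hi]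

/-- The two sides differ by `∑_{p < i} a (S - i) a i`, which is `conv a ((Set.Ioi p).indicator a) S`
since `S ≤ j + p` forces `S - i < j` on those terms. -/
theorem conv_indicator_Iic (a : ℕ → ℂ) {j p S : ℕ} (hS : S ≤ j + p) :
    conv ((Set.Iic j).indicator a) ((Set.Iic p).indicator a) S =
      conv ((Set.Iic j).indicator a - (Set.Ioi p).indicator a) a S := by
  have hsplit : conv ((Set.Iic j).indicator a - (Set.Ioi p).indicator a) a S =
      conv ((Set.Iic j).indicator a) a S - conv a ((Set.Ioi p).indicator a) S := by
    rw [conv_comm a]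
    simp [conv, sub_mul, sum_sub_distrib]
  rw [hsplit, conv, conv, conv, ← sum_sub_distrib]
  refine sum_congr rfl fun i hi => ?_
  by_cases hip : i ≤ p
  · simp [Set.indicator, not_lt.2 hip]
  · simp [Set.indicator, lt_of_not_ge hip, show S ≤ j + i by omega]

/-- `atom σ j = backConv σ (Pi.single j 1)`: for `σ = k^α` this is `uⱼ = W^{-α} eⱼ`. -/
noncomputable def atom (σ : ℕ → ℝ) (j : ℕ) : ℕ → ℂ := reflect j fun m => σ m

noncomputable def pairKernel (σ : ℕ → ℝ) (j p : ℕ) : ℕ → ℂ :=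
  reflect (j + p)
    ((Set.Iic j).indicator (fun m => (σ m : ℂ)) - (Set.Ioi p).indicator (fun m => (σ m : ℂ)))

theorem conv_atom_atom (σ : ℕ → ℝ) (j p : ℕ) :
    conv (atom σ j) (atom σ p) = backConv σ (pairKernel σ j p) := by
  rw [atom, atom, conv_reflect_reflect, pairKernel, backConv_reflect]
  exact reflect_congr fun S hS => conv_indicator_Iic _ hS

theorem backConv_eq_sum_atom {σ : ℕ → ℝ} {F : ℕ → ℂ} {N : ℕ} (hF : ∀ i ≥ N, F i = 0) :
    backConv σ F = ∑ j ∈ range N, F j • atom σ j := by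
  ext n
  rw [backConv_eq_sum_range (K := N - n) fun t ht => by rw [hF _ (by omega), mul_zero],
    Finset.sum_apply]
  simp only [Pi.smul_apply, smul_eq_mul, atom, reflect, mul_ite, mul_zero]
  rw [← sum_filter, show (range N).filter (n ≤ ·) = Ico n N by ext; simp; omega,
    sum_Ico_eq_sum_range]
  refine sum_congr rfl fun t _ => ?_
  rw [add_comm n t, Nat.add_sub_cancel, mul_comm]

theorem sum_norm_pairKernel {σ : ℕ → ℝ} (hσ : ∀ m, 0 ≤ σ m) (φ : ℕ → ℝ) {j p : ℕ}
    (hjp : j ≤ p) :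
    ∑ s ∈ range (j + p + 1), φ s * ‖pairKernel σ j p s‖ =
      ∑ m ∈ range (j + 1), σ m * φ (j + p - m) +
        ∑ m ∈ Icc (p + 1) (j + p), σ m * φ (j + p - m) := by
  rw [← sum_range_reflect]
  have hterm : ∀ m ∈ range (j + p + 1),
      φ (j + p + 1 - 1 - m) * ‖pairKernel σ j p (j + p + 1 - 1 - m)‖ =
        (if m ≤ j then σ m * φ (j + p - m) else 0) +
          (if p < m then σ m * φ (j + p - m) else 0) := by
    intro m hm
    have hm := mem_range.1 hm
    simp only [pairKernel, reflect,
      show j + p + 1 - 1 - m = j + p - m by omega, if_pos (Nat.sub_le _ _),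
      show j + p - (j + p - m) = m by omega]
    by_cases hmj : m ≤ j
    · simp [hmj, show ¬p < m by omega, abs_of_nonneg (hσ m), mul_comm]
    · by_cases hpm : p < m
      · simp [hmj, hpm, abs_of_nonneg (hσ m), mul_comm]
      · simp [hmj, hpm]
  rw [sum_congr rfl hterm, sum_add_distrib, ← sum_filter, ← sum_filter]
  congr 1 <;> apply sum_congr _ fun _ _ => rfl <;> ext <;> simp <;> omega

theorem conv_sum_smul_sum {ι κ : Type*} (s : Finset ι) (t : Finset κ) (F : ι → ℂ) (G : κ → ℂ)
    (u : ι → ℕ → ℂ) (v : κ → ℕ → ℂ) :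
    conv (∑ j ∈ s, F j • u j) (∑ p ∈ t, G p • v p) =
      ∑ x ∈ s ×ˢ t, (F x.1 * G x.2) • conv (u x.1) (v x.2) := by
  ext n
  simp only [conv, Finset.sum_apply, Pi.smul_apply, smul_eq_mul, sum_mul_sum]
  simp only [mul_sum, sum_product]
  rw [Finset.sum_comm]
  refine sum_congr rfl fun j _ => ?_
  rw [Finset.sum_comm]
  exact sum_congr rfl fun p _ => sum_congr rfl fun i _ => by ring

section qNorm

variable {α : ℝ} {φ : ℕ → ℝ} {f g : ℕ → ℂ} {N : ℕ}

theorem weylDiff_eq_zero_of_le (hα : 0 < α) (hf : ∀ i ≥ N, f i = 0) :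
    ∀ n ≥ N, weylDiff α f n = 0 := by
  rw [weylDiff_eq_backConv hα hf]
  exact backConv_eq_zero_of_le hf

theorem qNorm_eq_sum_range {K : ℕ} (hK : ∀ n ≥ K, weylDiff α f n = 0) :
    qNorm α φ f = ∑ n ∈ range K, φ n * ‖weylDiff α f n‖ :=
  finsum_eq_sum_of_support_subset _ fun n hn =>
    by simpa using lt_of_not_ge fun h => hn (by simp [hK n h])

theorem eq_sum_weylDiff_smul_atom (hα : 0 < α) (hf : ∀ i ≥ N, f i = 0) :
    f = ∑ j ∈ range N, weylDiff α f j • atom (multichoose α) j := by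
  rw [← backConv_eq_sum_atom (weylDiff_eq_zero_of_le hα hf), weylDiff_eq_backConv hα hf,
    backConv_multichoose_add _ _ hf, add_neg_cancel, backConv_multichoose_zero]

theorem weylDiff_conv_atom (hα : 0 < α) (j p : ℕ) :
    weylDiff α (conv (atom (multichoose α) j) (atom (multichoose α) p)) =
      pairKernel (multichoose α) j p := by
  have hK : ∀ s ≥ j + p + 1, pairKernel (multichoose α) j p s = 0 := reflect_eq_zero _
  rw [conv_atom_atom, weylDiff_eq_backConv hα (backConv_eq_zero_of_le hK),
    backConv_multichoose_add _ _ hK, neg_add_cancel, backConv_multichoose_zero]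

theorem qNorm_smul (hα : 0 < α) (hf : f.support.Finite) (a : ℂ) :
    qNorm α φ (a • f) = ‖a‖ * qNorm α φ f := by
  obtain ⟨N, hN⟩ := exists_forall_ge_eq_zero hf
  have haf : ∀ i ≥ N, (a • f) i = 0 := fun i hi => by simp [hN i hi]
  rw [qNorm_eq_sum_range (weylDiff_eq_zero_of_le hα haf),
    qNorm_eq_sum_range (weylDiff_eq_zero_of_le hα hN), mul_sum, weylDiff_eq_backConv hα haf,
    backConv_smul hN, weylDiff_eq_backConv hα hN]
  refine sum_congr rfl fun n _ => ?_
  rw [Pi.smul_apply, norm_smul]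
  ring

theorem qNorm_add_le (hα : 0 < α) (hφ : ∀ n, 0 ≤ φ n) (hf : f.support.Finite)
    (hg : g.support.Finite) : qNorm α φ (f + g) ≤ qNorm α φ f + qNorm α φ g := by
  obtain ⟨N, hN⟩ := exists_forall_ge_eq_zero hf
  obtain ⟨M, hM⟩ := exists_forall_ge_eq_zero hg
  have hf' : ∀ i ≥ N + M, f i = 0 := fun i hi => hN i (by omega)
  have hg' : ∀ i ≥ N + M, g i = 0 := fun i hi => hM i (by omega)
  have hfg : ∀ i ≥ N + M, (f + g) i = 0 := fun i hi => by simp [hf' i hi, hg' i hi]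
  rw [qNorm_eq_sum_range (weylDiff_eq_zero_of_le hα hfg),
    qNorm_eq_sum_range (weylDiff_eq_zero_of_le hα hf'),
    qNorm_eq_sum_range (weylDiff_eq_zero_of_le hα hg'), ← sum_add_distrib,
    weylDiff_eq_backConv hα hfg, backConv_add hf' hg', weylDiff_eq_backConv hα hf',
    weylDiff_eq_backConv hα hg']
  refine sum_le_sum fun n _ => ?_
  rw [← mul_add]
  exact mul_le_mul_of_nonneg_left (norm_add_le _ _) (hφ n)

theorem qNorm_zero (hα : 0 < α) : qNorm α φ 0 = 0 := by
  simpa using qNorm_eq_sum_range (φ := φ) (K := 0)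
    (weylDiff_eq_zero_of_le (f := 0) hα fun _ _ => rfl)

theorem qNorm_eq_zero_iff (hα : 0 < α) (hφ : ∀ n, 0 < φ n) (hf : f.support.Finite) :
    qNorm α φ f = 0 ↔ f = 0 := by
  refine ⟨fun hq => ?_, fun hf0 => hf0 ▸ qNorm_zero hα⟩
  obtain ⟨N, hN⟩ := exists_forall_ge_eq_zero hf
  rw [qNorm_eq_sum_range (weylDiff_eq_zero_of_le hα hN),
    sum_eq_zero_iff_of_nonneg fun n _ => mul_nonneg (hφ n).le (norm_nonneg _)] at hq
  rw [eq_sum_weylDiff_smul_atom hα hN]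
  refine sum_eq_zero fun j hj => ?_
  rw [norm_eq_zero.1 ((mul_eq_zero.1 (hq j hj)).resolve_left (hφ j).ne'), zero_smul]

theorem qNorm_sum_le (hα : 0 < α) (hφ : ∀ n, 0 ≤ φ n) {ι : Type*} (s : Finset ι)
    (H : ι → ℕ → ℂ) (hH : ∀ i ∈ s, (H i).support.Finite) :
    qNorm α φ (∑ i ∈ s, H i) ≤ ∑ i ∈ s, qNorm α φ (H i) :=
  le_sum_of_subadditive_on_pred (qNorm α φ) (fun f => f.support.Finite) (qNorm_zero hα).le
    (fun _ _ hf hg => qNorm_add_le hα hφ hf hg)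
    (fun f g hf hg => (hf.union hg).subset (Function.support_add f g)) H hH

theorem qNorm_conv_atom_le (hα : 0 < α) (hφ : ∀ n, 0 < φ n) {c : ℝ} (h : omegaLoc α φ c)
    (j p : ℕ) :
    qNorm α φ (conv (atom (multichoose α) j) (atom (multichoose α) p)) ≤
      max c (φ 0)⁻¹ * (φ j * φ p) := by
  wlog hjp : j ≤ p generalizing j p
  · rw [conv_comm, mul_comm (φ j)]
    exact this p j (by omega)
  rw [qNorm_eq_sum_range (K := j + p + 1)
      (by rw [weylDiff_conv_atom hα]; exact reflect_eq_zero _),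
    weylDiff_conv_atom hα, sum_norm_pairKernel (fun m => (Real.multichoose_pos hα m).le) φ hjp]
  rcases Nat.eq_zero_or_pos j with rfl | hj
  -- `omegaLoc` says nothing about `j = 0`; this case is where `(φ 0)⁻¹` enters the constant.
  · calc _ = (φ 0)⁻¹ * (φ 0 * φ p) := by simp [(hφ 0).ne']
      _ ≤ _ := mul_le_mul_of_nonneg_right (le_max_right _ _) (by positivity [hφ 0, hφ p])
  · have hloc := h j p hj hjp
    rw [cesK_eq_multichoose hα] at hloc
    exact hloc.trans (mul_le_mul_of_nonneg_right (le_max_left _ _)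
      (mul_pos (hφ j) (hφ p)).le)

theorem qNorm_conv_le (hα : 0 < α) (hφ : ∀ n, 0 < φ n) {c : ℝ} (h : omegaLoc α φ c)
    (hf : f.support.Finite) (hg : g.support.Finite) :
    qNorm α φ (conv f g) ≤ max c (φ 0)⁻¹ * qNorm α φ f * qNorm α φ g := by
  obtain ⟨N, hN⟩ := exists_forall_ge_eq_zero hf
  obtain ⟨M, hM⟩ := exists_forall_ge_eq_zero hg
  set a := multichoose α
  have hfin : ∀ j p, (conv (atom a j) (atom a p)).support.Finite := fun j p => by
    rw [conv_atom_atom]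
    exact support_finite_of_forall_ge_eq_zero (backConv_eq_zero_of_le (reflect_eq_zero _))
  calc qNorm α φ (conv f g)
      = qNorm α φ (∑ x ∈ range N ×ˢ range M,
          (weylDiff α f x.1 * weylDiff α g x.2) • conv (atom a x.1) (atom a x.2)) := by
        rw [← conv_sum_smul_sum, ← eq_sum_weylDiff_smul_atom hα hN,
          ← eq_sum_weylDiff_smul_atom hα hM]
    _ ≤ ∑ x ∈ range N ×ˢ range M, qNorm α φ
          ((weylDiff α f x.1 * weylDiff α g x.2) • conv (atom a x.1) (atom a x.2)) :=
        qNorm_sum_le hα (fun n => (hφ n).le) _ _ fun x _ =>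
          (hfin _ _).subset (Function.support_const_smul_subset _ _)
    _ ≤ ∑ x ∈ range N ×ˢ range M,
          ‖weylDiff α f x.1‖ * ‖weylDiff α g x.2‖ * (max c (φ 0)⁻¹ * (φ x.1 * φ x.2)) := by
        refine sum_le_sum fun x _ => ?_
        rw [qNorm_smul hα (hfin _ _), norm_mul]
        exact mul_le_mul_of_nonneg_left (qNorm_conv_atom_le hα hφ h _ _) (by positivity)
    _ = max c (φ 0)⁻¹ * (∑ j ∈ range N, φ j * ‖weylDiff α f j‖) *
          ∑ p ∈ range M, φ p * ‖weylDiff α g p‖ := by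
        rw [sum_product, mul_assoc, sum_mul_sum, mul_sum]
        refine sum_congr rfl fun j _ => ?_
        rw [mul_sum]
        exact sum_congr rfl fun p _ => by ring
    _ = max c (φ 0)⁻¹ * qNorm α φ f * qNorm α φ g := by
        rw [qNorm_eq_sum_range (weylDiff_eq_zero_of_le hα hN),
          qNorm_eq_sum_range (weylDiff_eq_zero_of_le hα hM)]

end qNorm

theorem stmt11_general (α : ℝ) (hα : 0 < α) (φ : ℕ → ℝ) (hφ : ∀ n, 0 < φ n) (c : ℝ)
    (h : omegaLoc α φ c) :
    (∀ f : ℕ → ℂ, (Function.support f).Finite → (qNorm α φ f = 0 ↔ f = 0)) ∧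
    (∀ (a : ℂ) (f : ℕ → ℂ), (Function.support f).Finite →
      qNorm α φ (a • f) = ‖a‖ * qNorm α φ f) ∧
    (∀ f g : ℕ → ℂ, (Function.support f).Finite → (Function.support g).Finite →
      qNorm α φ (f + g) ≤ qNorm α φ f + qNorm α φ g) ∧
    ∃ C : ℝ, 0 < C ∧ ∀ f g : ℕ → ℂ,
      (Function.support f).Finite → (Function.support g).Finite →
      qNorm α φ (fun n => conv f g n) ≤ C * qNorm α φ f * qNorm α φ g :=
  ⟨fun _ hf => qNorm_eq_zero_iff hα hφ hf,
    fun a _ hf => qNorm_smul hα hf a,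
    fun _ _ hf hg => qNorm_add_le hα (fun n => (hφ n).le) hf hg,
    max c (φ 0)⁻¹, lt_max_of_lt_right (inv_pos.2 (hφ 0)),
    fun _ _ hf hg => qNorm_conv_le hα hφ h hf hg⟩

theorem stmt11 (α : ℝ) (hα : 0 < α) (φ : ℕ → ℝ) (hφ : ∀ n, 0 < φ n) (c : ℝ) (hc : 0 < c)
    (h : omegaLoc α φ c) :
    (∀ f : ℕ → ℂ, (Function.support f).Finite → (qNorm α φ f = 0 ↔ f = 0)) ∧
    (∀ (a : ℂ) (f : ℕ → ℂ), (Function.support f).Finite →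
      qNorm α φ (a • f) = ‖a‖ * qNorm α φ f) ∧
    (∀ f g : ℕ → ℂ, (Function.support f).Finite → (Function.support g).Finite →
      qNorm α φ (f + g) ≤ qNorm α φ f + qNorm α φ g) ∧
    ∃ C : ℝ, 0 < C ∧ ∀ f g : ℕ → ℂ,
      (Function.support f).Finite → (Function.support g).Finite →
      qNorm α φ (fun n => conv f g n) ≤ C * qNorm α φ f * qNorm α φ g :=
  stmt11_general α hα φ hφ c h
end

section
/- For 0 < α < β and every finitely supported sequence f : ℕ₀ → ℂ one has q_α(f) ≤ q_β(f), where q_γ(f) = ∑_{n=0}^∞ k^{γ+1}(n)·|W^γ f(n)|. -/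
/-- `q_α(f) = ∑_{n=0}^∞ k^{α+1}(n)·|W^α f(n)|`, a finite sum for finitely supported `f`. -/
noncomputable def qA (α : ℝ) (f : ℕ → ℂ) : ℝ :=
  ∑ᶠ n : ℕ, cesK (α + 1) n * ‖weylDiff α f n‖

/-!
Since `k^a(n) = (-1)^n (-a choose n)`, the Chu–Vandermonde identity makes the Cesàro kernels a
convolution semigroup, `k^a * k^b = k^(a+b)`. Hence Weyl sums compose additively,
`W^{-a} W^{-b} = W^{-(a+b)}`; they commute with `Δ`, and `Δ W^{-1} = -id`. So `W^α f` may be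
computed with any integer `m > α` in place of `[α] + 1`, and taking `m > β` gives
`W^α f = W^{-(β-α)} W^β f`. Moving the absolute value inside this sum and using the semigroup
property once more,
`q_α(f) ≤ ∑_n k^{α+1}(n) ∑_j k^{β-α}(j) |W^β f(j+n)| = ∑_m k^{β+1}(m) |W^β f(m)| = q_β(f)`.
-/

open Finset Polynomial

theorem Ring.multichoose_add_s12 {R : Type*} [CommRing R] [BinomialRing R] (r s : R) (k : ℕ) :
    multichoose (r + s) k = ∑ ij ∈ antidiagonal k, multichoose r ij.1 * multichoose s ij.2 := by
  have h (t : R) (n : ℕ) : multichoose t n = Int.negOnePow n • choose (-t) n := by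
    rw [choose_neg', smul_smul, ← Int.negOnePow_add, ← two_mul, Int.negOnePow_two_mul, one_smul]
  simp only [h, neg_add]
  rw [add_choose_eq k (Commute.all (-r) (-s)), smul_sum]
  refine sum_congr rfl fun ij hij => ?_
  rw [smul_mul_smul_comm, ← Int.negOnePow_add, ← Nat.cast_add, mem_antidiagonal.mp hij]

theorem Real.Gamma_natCast_add_eq_mul_eval_ascPochhammer {a : ℝ} (ha : 0 < a) (n : ℕ) :
    Gamma (n + a) = Gamma a * (ascPochhammer ℝ n).eval a := by
  induction n with
  | zero => simp
  | succ n ih =>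
    rw [ascPochhammer_succ_eval, ← mul_assoc, ← ih, Nat.cast_succ, add_right_comm,
      Gamma_add_one (by positivity), mul_comm, add_comm a]

section CesaroKernel

variable {a b : ℝ}

lemma cesK_eq_multichoose_s12 (ha : 0 < a) (n : ℕ) : cesK a n = Ring.multichoose a n := by
  have h := Ring.factorial_nsmul_multichoose_eq_ascPochhammer a n
  rw [ascPochhammer_smeval_eq_eval, nsmul_eq_mul] at h
  have : Real.Gamma a ≠ 0 := (Real.Gamma_pos_of_pos ha).ne'
  have : (n.factorial : ℝ) ≠ 0 := by positivity
  rw [cesK, Real.Gamma_natCast_add_eq_mul_eval_ascPochhammer ha, Real.Gamma_nat_eq_factorial, ← h]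
  field_simp

lemma cesK_pos (ha : 0 < a) (n : ℕ) : 0 < cesK a n :=
  div_pos (Real.Gamma_pos_of_pos (by positivity))
    (mul_pos (Real.Gamma_pos_of_pos ha) (Real.Gamma_pos_of_pos (by positivity)))

lemma cesK_one (n : ℕ) : cesK 1 n = 1 := by
  rw [cesK_eq_multichoose_s12 one_pos, Ring.multichoose_one]

lemma cesK_add (ha : 0 < a) (hb : 0 < b) (m : ℕ) :
    cesK (a + b) m = ∑ ij ∈ antidiagonal m, cesK a ij.1 * cesK b ij.2 := by
  simp only [cesK_eq_multichoose_s12 (add_pos ha hb), cesK_eq_multichoose_s12 ha,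
    cesK_eq_multichoose_s12 hb, Ring.multichoose_add_s12]

end CesaroKernel

lemma finsum_eq_sum_range_of_eq_zero {M : Type*} [AddCommMonoid M] {N : ℕ} {g : ℕ → M}
    (hg : ∀ n ≥ N, g n = 0) : ∑ᶠ n, g n = ∑ n ∈ range N, g n :=
  finsum_eq_sum_of_support_subset g fun n hn => by
    simpa using not_le.mp (mt (hg n) hn)

lemma sum_range_sum_range_eq_sum_antidiagonal {M : Type*} [AddCommMonoid M] {N : ℕ}
    {F : ℕ → ℕ → M} (hF : ∀ i j, N ≤ i + j → F i j = 0) :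
    ∑ i ∈ range N, ∑ j ∈ range N, F i j = ∑ m ∈ range N, ∑ ij ∈ antidiagonal m, F ij.1 ij.2 := by
  simp only [Nat.sum_antidiagonal_eq_sum_range_succ F, sum_range_diag_flip]
  refine sum_congr rfl fun i _ => (sum_subset (range_mono (N.sub_le i)) ?_).symm
  intro j _ hj
  exact hF i j (by rw [mem_range] at hj; omega)

lemma sum_cesK_smul_sum_cesK_smul {M : Type*} [AddCommGroup M] [Module ℝ M] {N : ℕ}
    {g : ℕ → M} (hg : ∀ n ≥ N, g n = 0) {a b : ℝ} (ha : 0 < a) (hb : 0 < b) :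
    ∑ i ∈ range N, cesK a i • ∑ j ∈ range N, cesK b j • g (j + i) =
      ∑ m ∈ range N, cesK (a + b) m • g m := by
  simp only [smul_sum, smul_smul]
  rw [sum_range_sum_range_eq_sum_antidiagonal fun i j hij => by rw [hg _ (by omega), smul_zero]]
  refine sum_congr rfl fun m _ => ?_
  rw [cesK_add ha hb, sum_smul]
  exact sum_congr rfl fun ij hij => by rw [add_comm, mem_antidiagonal.mp hij]

section Weyl

variable {N : ℕ} {f g : ℕ → ℂ}

lemma weylSum_eq_sum (hf : ∀ n ≥ N, f n = 0) (a : ℝ) (n : ℕ) :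
    weylSum a f n = ∑ j ∈ range N, (cesK a j : ℂ) * f (j + n) :=
  finsum_eq_sum_range_of_eq_zero fun j hj => by rw [hf _ (by omega), mul_zero]

lemma weylSum_eq_zero (hf : ∀ n ≥ N, f n = 0) (a : ℝ) : ∀ n ≥ N, weylSum a f n = 0 :=
  fun n hn => by
    rw [weylSum_eq_sum hf]
    exact sum_eq_zero fun j _ => by rw [hf _ (by omega), mul_zero]

lemma norm_weylSum_le (hf : ∀ n ≥ N, f n = 0) {a : ℝ} (ha : 0 < a) (n : ℕ) :
    ‖weylSum a f n‖ ≤ ∑ j ∈ range N, cesK a j * ‖f (j + n)‖ := by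
  rw [weylSum_eq_sum hf]
  refine (norm_sum_le _ _).trans_eq (sum_congr rfl fun j _ => ?_)
  rw [norm_mul, Complex.norm_real, Real.norm_of_nonneg (cesK_pos ha j).le]

lemma weylSum_const_mul (a : ℝ) (c : ℂ) (f : ℕ → ℂ) :
    weylSum a (fun n => c * f n) = fun n => c * weylSum a f n := by
  funext n
  rw [weylSum, weylSum, mul_finsum]
  exact finsum_congr fun j => mul_left_comm _ _ _

lemma fdiff_eq_zero (hg : ∀ n ≥ N, g n = 0) : ∀ n ≥ N, fdiff g n = 0 :=
  fun n hn => by rw [fdiff, hg n hn, hg (n + 1) (by omega), sub_zero]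

lemma iterate_fdiff_eq_zero (hg : ∀ n ≥ N, g n = 0) (k : ℕ) : ∀ n ≥ N, fdiff^[k] g n = 0 := by
  induction k with
  | zero => exact hg
  | succ k ih => simpa only [Function.iterate_succ_apply'] using fdiff_eq_zero ih

lemma iterate_fdiff_const_mul (c : ℂ) (k : ℕ) :
    fdiff^[k] (fun n => c * g n) = fun n => c * fdiff^[k] g n := by
  induction k with
  | zero => rfl
  | succ k ih =>
    rw [Function.iterate_succ_apply', ih, Function.iterate_succ_apply']
    funext n
    exact (mul_sub c _ _).symm

lemma fdiff_weylSum (hf : ∀ n ≥ N, f n = 0) (a : ℝ) :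
    fdiff (weylSum a f) = weylSum a (fdiff f) := by
  funext n
  rw [fdiff, weylSum_eq_sum hf, weylSum_eq_sum hf, weylSum_eq_sum (fdiff_eq_zero hf),
    ← sum_sub_distrib]
  exact sum_congr rfl fun j _ => by rw [fdiff, mul_sub, ← add_assoc]

lemma iterate_fdiff_weylSum (hf : ∀ n ≥ N, f n = 0) (a : ℝ) (k : ℕ) :
    fdiff^[k] (weylSum a f) = weylSum a (fdiff^[k] f) := by
  induction k with
  | zero => rfl
  | succ k ih =>
    rw [Function.iterate_succ_apply', ih, fdiff_weylSum (iterate_fdiff_eq_zero hf k),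
      Function.iterate_succ_apply']

lemma weylSum_weylSum (hf : ∀ n ≥ N, f n = 0) {a b : ℝ} (ha : 0 < a) (hb : 0 < b) :
    weylSum a (weylSum b f) = weylSum (a + b) f := by
  funext n
  have hfn : ∀ m ≥ N, f (m + n) = 0 := fun m hm => hf _ (by omega)
  rw [weylSum_eq_sum (weylSum_eq_zero hf b), weylSum_eq_sum hf]
  simp only [weylSum_eq_sum hf, ← Complex.real_smul]
  convert sum_cesK_smul_sum_cesK_smul hfn ha hb using 4 with i _ j _
  congr 2
  omega

lemma fdiff_weylSum_one (hf : ∀ n ≥ N, f n = 0) : fdiff (weylSum 1 f) = fun n => -1 * f n := by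
  funext n
  have hsucc : weylSum 1 f n = f n + weylSum 1 f (n + 1) := by
    rw [weylSum_eq_sum (N := N + 1) fun m hm => hf m (by omega), sum_range_succ',
      weylSum_eq_sum hf]
    simp only [cesK_one, Complex.ofReal_one, one_mul, zero_add]
    rw [add_comm]
    exact congrArg _ (sum_congr rfl fun j _ => by rw [add_right_comm, add_assoc])
  rw [fdiff, hsucc]
  ring

lemma weylDiff_eq_of_lt (hf : ∀ n ≥ N, f n = 0) {γ : ℝ} (hγ : 0 < γ) {k : ℕ} (hk : γ < k) :
    weylDiff γ f = fun n => (-1) ^ k * fdiff^[k] (weylSum (k - γ) f) n := by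
  induction k, (Nat.floor_lt hγ.le).2 hk using Nat.le_induction with
  | base =>
    rw [weylDiff, if_neg hγ.ne']
    push_cast
    rfl
  | succ k hk' ih =>
    have hkγ : γ < k := (Nat.floor_lt hγ.le).1 hk'
    have hsplit : weylSum ((k + 1 : ℕ) - γ) f = weylSum 1 (weylSum (k - γ) f) := by
      rw [weylSum_weylSum hf one_pos (sub_pos.2 hkγ)]
      push_cast
      ring_nf
    rw [ih hkγ, hsplit, Function.iterate_succ_apply, fdiff_weylSum_one (weylSum_eq_zero hf _),
      iterate_fdiff_const_mul]
    funext n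
    ring

lemma weylDiff_eq_zero (hf : ∀ n ≥ N, f n = 0) {γ : ℝ} (hγ : 0 < γ) :
    ∀ n ≥ N, weylDiff γ f n = 0 := fun n hn => by
  rw [weylDiff, if_neg hγ.ne', iterate_fdiff_eq_zero (weylSum_eq_zero hf _) _ n hn, mul_zero]

lemma weylDiff_eq_weylSum_weylDiff (hf : ∀ n ≥ N, f n = 0) {α β : ℝ} (hα : 0 < α)
    (hαβ : α < β) : weylDiff α f = weylSum (β - α) (weylDiff β f) := by
  have hβ : β < (⌊β⌋₊ + 1 : ℕ) := by exact_mod_cast Nat.lt_floor_add_one β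
  rw [weylDiff_eq_of_lt hf hα (hαβ.trans hβ), weylDiff_eq_of_lt hf (hα.trans hαβ) hβ,
    weylSum_const_mul, ← iterate_fdiff_weylSum (weylSum_eq_zero hf _),
    weylSum_weylSum hf (sub_pos.2 hαβ) (sub_pos.2 hβ), sub_add_sub_cancel']

lemma qA_eq_sum (hf : ∀ n ≥ N, f n = 0) {γ : ℝ} (hγ : 0 < γ) :
    qA γ f = ∑ n ∈ range N, cesK (γ + 1) n * ‖weylDiff γ f n‖ :=
  finsum_eq_sum_range_of_eq_zero fun n hn => by
    rw [weylDiff_eq_zero hf hγ n hn, norm_zero, mul_zero]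

end Weyl

theorem stmt12 (α β : ℝ) (hα : 0 < α) (hβ : α < β) (f : ℕ → ℂ)
    (hf : (Function.support f).Finite) :
    qA α f ≤ qA β f := by
  obtain ⟨N, hN⟩ := hf.bddAbove
  have hfN : ∀ n ≥ N + 1, f n = 0 := fun n hn => by_contra fun h => (hN h).not_gt hn
  have hβ0 : 0 < β := hα.trans hβ
  rw [qA_eq_sum hfN hα, qA_eq_sum hfN hβ0, weylDiff_eq_weylSum_weylDiff hfN hα hβ]
  calc ∑ n ∈ range (N + 1), cesK (α + 1) n * ‖weylSum (β - α) (weylDiff β f) n‖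
      ≤ ∑ n ∈ range (N + 1), cesK (α + 1) n *
          ∑ j ∈ range (N + 1), cesK (β - α) j * ‖weylDiff β f (j + n)‖ := by
        gcongr with n
        · exact (cesK_pos (by positivity) n).le
        · exact norm_weylSum_le (weylDiff_eq_zero hfN hβ0) (sub_pos.2 hβ) n
    _ = ∑ m ∈ range (N + 1), cesK (β + 1) m * ‖weylDiff β f m‖ := by
        have h := sum_cesK_smul_sum_cesK_smul (g := fun n => ‖weylDiff β f n‖) (fun n hn => by
            rw [weylDiff_eq_zero hfN hβ0 n hn, norm_zero]) (by positivity : 0 < α + 1)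
          (sub_pos.2 hβ)
        simpa only [smul_eq_mul, show α + 1 + (β - α) = β + 1 by ring] using h
end
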